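/- arXiv:2204.12412 — 7 statements merged into one kernel-verified Lean document; each statement's English description precedes it below -/
import Mathlib

section
/- Let V₁ and V₂ be finite-dimensional vector spaces over a field K, of dimensions d₁ and d₂. If S = {(v_i, v'_i) : 1 ≤ i ≤ d₁+d₂} is a basis of V₁ ⊕ V₂, then S can be partitioned into sets B₁ and B₂ of sizes d₁ and d₂ respectively, such that the projections of the elements of B₁ to V₁ form a basis of V₁ and the projections of the elements of B₂ to V₂ form a basis of V₂. -/
/-!
Split every basis vector `b i = (x, y)` as `(x, 0) + (0, y)` and expand `det_b b = 1`
multilinearly: some term `det_b (s.piecewise (fun i ↦ ((b i).1, 0)) (fun i ↦ (0, (b i).2)))` is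
nonzero, so that family is linearly independent. Hence the first components over `s` are
independent in `V₁` and the second components over `sᶜ` are independent in `V₂`; as
`#s + #sᶜ = dim V₁ + dim V₂`, both counts are sharp and both families are bases.
-/

open Module Finset

theorem Module.Basis.exists_linearIndependent_piecewise {R M ι : Type*} [CommRing R]
    [IsDomain R] [AddCommGroup M] [Module R M] [Fintype ι] [DecidableEq ι]
    (b : Basis ι R M) {u v : ι → M} (h : ⇑b = u + v) :
    ∃ s : Finset ι, LinearIndependent R (s.piecewise u v) := by
  have hsum : ∑ s : Finset ι, b.det (s.piecewise u v) ≠ 0 := by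
    rw [← b.det.map_add_univ, ← h, b.det_self]
    exact one_ne_zero
  obtain ⟨s, -, hs⟩ := exists_ne_zero_of_sum_ne_zero hsum
  exact ⟨s, not_not.mp fun hdep => hs (b.det.map_linearDependent _ hdep)⟩

section Prod

variable {K V₁ V₂ ι : Type*} [Ring K] [AddCommGroup V₁] [Module K V₁]
  [AddCommGroup V₂] [Module K V₂] {v : ι → V₁ × V₂}

theorem LinearIndependent.restrict_of_eq_inl (hv : LinearIndependent K v) {s : Set ι}
    {f : ι → V₁} (hs : ∀ i ∈ s, v i = (f i, 0)) : LinearIndependent K (fun i : s => f i) := by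
  refine LinearIndependent.of_comp (LinearMap.inl K V₁ V₂) ?_
  convert hv.comp ((↑) : s → ι) Subtype.val_injective using 1
  funext i
  exact (hs i i.2).symm

theorem LinearIndependent.restrict_of_eq_inr (hv : LinearIndependent K v) {s : Set ι}
    {g : ι → V₂} (hs : ∀ i ∈ s, v i = (0, g i)) : LinearIndependent K (fun i : s => g i) := by
  refine LinearIndependent.of_comp (LinearMap.inr K V₁ V₂) ?_
  convert hv.comp ((↑) : s → ι) Subtype.val_injective using 1
  funext i
  exact (hs i i.2).symm

end Prod

/-- A basis of `V₁ × V₂` indexed by a finite type can be partitioned into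
two sets `B₁, B₂` of sizes `dim V₁` and `dim V₂` such that the projections of the
elements of `Bᵢ` to `Vᵢ` form a basis of `Vᵢ`. -/
theorem stmt_0 {K V₁ V₂ : Type*} [Field K]
    [AddCommGroup V₁] [Module K V₁] [FiniteDimensional K V₁]
    [AddCommGroup V₂] [Module K V₂] [FiniteDimensional K V₂]
    {ι : Type*} [Fintype ι] [DecidableEq ι] (b : Module.Basis ι K (V₁ × V₂)) :
    ∃ B₁ B₂ : Finset ι,
      Disjoint B₁ B₂ ∧ B₁ ∪ B₂ = Finset.univ ∧
      B₁.card = Module.finrank K V₁ ∧ B₂.card = Module.finrank K V₂ ∧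
      (LinearIndependent K (fun i : B₁ => (b i).1) ∧
        Submodule.span K (Set.range (fun i : B₁ => (b i).1)) = ⊤) ∧
      (LinearIndependent K (fun i : B₂ => (b i).2) ∧
        Submodule.span K (Set.range (fun i : B₂ => (b i).2)) = ⊤) := by
  obtain ⟨s, hs⟩ := b.exists_linearIndependent_piecewise
    (u := fun i => ((b i).1, 0)) (v := fun i => (0, (b i).2)) (by ext <;> simp)
  have li₁ : LinearIndependent K (fun i : s => (b i).1) :=
    hs.restrict_of_eq_inl (s := ↑s) fun i hi => piecewise_eq_of_mem _ _ _ hi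
  have li₂ : LinearIndependent K (fun i : (sᶜ : Finset ι) => (b i).2) :=
    hs.restrict_of_eq_inr (s := ↑sᶜ) fun i hi =>
      piecewise_eq_of_notMem _ _ _ (mem_compl.mp (mem_coe.mp hi))
  have le₁ := li₁.fintype_card_le_finrank
  have le₂ := li₂.fintype_card_le_finrank
  have htot : #s + #sᶜ = finrank K V₁ + finrank K V₂ := by
    rw [card_add_card_compl, ← finrank_prod, finrank_eq_card_basis b]
  rw [Fintype.card_coe] at le₁ le₂
  have hc₁ : #s = finrank K V₁ := by omega
  have hc₂ : #sᶜ = finrank K V₂ := by omega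
  refine ⟨s, sᶜ, disjoint_compl_right, union_compl s, hc₁, hc₂,
    ⟨li₁, li₁.span_eq_top_of_card_eq_finrank' ?_⟩, ⟨li₂, li₂.span_eq_top_of_card_eq_finrank' ?_⟩⟩
  · rwa [Fintype.card_coe]
  · rwa [Fintype.card_coe]
end

section
/- Let V be a finite-dimensional vector space over a field K, let k ≥ 1, and let S be a basis of the direct sum V^{⊕k}. Then S can be partitioned into subsets B₁, …, B_k such that for each 1 ≤ ℓ ≤ k, the images of the elements of B_ℓ under the ℓ-th coordinate projection π_ℓ : V^{⊕k} → V form a basis of V. -/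
/-!
Expand each basis vector into its components, `b i = ∑ ℓ, Pi.single ℓ (b i ℓ)`. Multilinearity
of `b.det` turns `1 = b.det b` into a sum over choices `f : ι → Fin k` of
`b.det (fun i => Pi.single (f i) (b i (f i)))`, so some choice `f` gives a linearly independent
family. Its fibre over `ℓ` lives in the `ℓ`-th summand, so `π_ℓ` is injective on its span and
`B ℓ := f⁻¹(ℓ)` has independent images in `V`; hence `#B ℓ ≤ dim V`. As the `#B ℓ` add up to
`k · dim V`, each equals `dim V`, and the images form a basis.
-/

open Finset

theorem Module.Basis.exists_linearIndependent_of_forall_sum_eq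
    {R M ι κ : Type*} [CommRing R] [IsDomain R] [AddCommGroup M] [Module R M]
    [Fintype ι] [DecidableEq ι] [Fintype κ] (b : Module.Basis ι R M) (g : ι → κ → M)
    (hg : ∀ i, ∑ ℓ, g i ℓ = b i) :
    ∃ f : ι → κ, LinearIndependent R fun i => g i (f i) := by
  by_contra! h
  have hexpand : b.det (fun i => ∑ ℓ, g i ℓ) = ∑ f : ι → κ, b.det fun i => g i (f i) :=
    b.det.toMultilinearMap.map_sum g
  simp_rw [hg, b.det_self, fun f => b.det.map_linearDependent _ (h f), sum_const_zero] at hexpand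
  exact one_ne_zero hexpand

theorem linearIndepOn_apply_fiber {R M ι κ : Type*} [Semiring R] [AddCommMonoid M] [Module R M]
    [DecidableEq κ] {v : ι → κ → M} {f : ι → κ}
    (hv : LinearIndependent R fun i => (Pi.single (f i) (v i (f i)) : κ → M)) (ℓ : κ) :
    LinearIndepOn R (fun i => v i ℓ) {i | f i = ℓ} := by
  have hfiber : (fun i : {i | f i = ℓ} => (Pi.single (f i) (v i (f i)) : κ → M)) =
      LinearMap.single R (fun _ => M) ℓ ∘ fun i : {i | f i = ℓ} => v i ℓ := by
    ext ⟨i, hi : f i = ℓ⟩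
    simp [hi]
  have hcomp := hv.comp ((↑) : {i | f i = ℓ} → ι) Subtype.val_injective
  rw [Function.comp_def, hfiber] at hcomp
  exact hcomp.of_comp

theorem Fintype.card_fiber_eq_of_card_eq_mul {ι κ : Type*} [Fintype ι] [Fintype κ] [DecidableEq κ]
    {f : ι → κ} {n : ℕ} (hle : ∀ ℓ, #{i | f i = ℓ} ≤ n)
    (hcard : Fintype.card ι = Fintype.card κ * n) (ℓ : κ) : #{i | f i = ℓ} = n := by
  have hsum : ∑ ℓ, #{i | f i = ℓ} = ∑ _ℓ : κ, n := by
    rw [← card_eq_sum_card_fiberwise (fun i _ => mem_univ (f i)), card_univ, hcard]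
    simp
  exact (sum_eq_sum_iff_of_le fun ℓ _ => hle ℓ).1 hsum ℓ (mem_univ ℓ)

theorem stmt_1_general {K V : Type*} [Field K] [AddCommGroup V] [Module K V]
    [FiniteDimensional K V] {k : ℕ}
    {ι : Type*} [Fintype ι] [DecidableEq ι] (b : Module.Basis ι K (Fin k → V)) :
    ∃ B : Fin k → Finset ι,
      (∀ ℓ ℓ' : Fin k, ℓ ≠ ℓ' → Disjoint (B ℓ) (B ℓ')) ∧
      (Finset.univ.biUnion B = Finset.univ) ∧
      (∀ ℓ : Fin k,
        LinearIndependent K (fun i : B ℓ => b i ℓ) ∧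
        Submodule.span K (Set.range (fun i : B ℓ => b i ℓ)) = ⊤) := by
  obtain ⟨f, hf⟩ := b.exists_linearIndependent_of_forall_sum_eq
    (fun i ℓ => Pi.single ℓ (b i ℓ)) fun i => univ_sum_single (b i)
  have hindep (ℓ : Fin k) : LinearIndepOn K (fun i => b i ℓ) ↑({i | f i = ℓ} : Finset ι) := by
    simpa using linearIndepOn_apply_fiber hf ℓ
  have hcard : Fintype.card ι = Fintype.card (Fin k) * Module.finrank K V := by
    rw [← Module.finrank_eq_card_basis b, Module.finrank_pi_fintype]
    simp
  have hle (ℓ : Fin k) : #{i | f i = ℓ} ≤ Module.finrank K V := by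
    simpa using (hindep ℓ).fintype_card_le_finrank
  have hfiber := Fintype.card_fiber_eq_of_card_eq_mul hle hcard
  refine ⟨fun ℓ => {i | f i = ℓ}, fun ℓ ℓ' hne => disjoint_filter.2 fun i _ h h' => hne (h ▸ h'),
    biUnion_filter_eq_of_maps_to fun i _ => mem_univ (f i), fun ℓ => ⟨hindep ℓ, ?_⟩⟩
  exact (hindep ℓ).span_eq_top_of_card_eq_finrank' (by simpa using hfiber ℓ)

/-- A basis of `V^{⊕k}` can be partitioned into `k` subsets `B₁, …, B_k`
such that for each `ℓ` the images of the elements of `B_ℓ` under the `ℓ`-th coordinate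
projection form a basis of `V`. -/
theorem stmt_1 {K V : Type*} [Field K] [AddCommGroup V] [Module K V]
    [FiniteDimensional K V] {k : ℕ} (hk : 1 ≤ k)
    {ι : Type*} [Fintype ι] [DecidableEq ι] (b : Module.Basis ι K (Fin k → V)) :
    ∃ B : Fin k → Finset ι,
      (∀ ℓ ℓ' : Fin k, ℓ ≠ ℓ' → Disjoint (B ℓ) (B ℓ')) ∧
      (Finset.univ.biUnion B = Finset.univ) ∧
      (∀ ℓ : Fin k,
        LinearIndependent K (fun i : B ℓ => b i ℓ) ∧
        Submodule.span K (Set.range (fun i : B ℓ => b i ℓ)) = ⊤) :=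
  stmt_1_general b
end

section
/- Let K be a field and f₁, …, f_r ∈ K[x₁, …, x_m] polynomials such that the degree of each f_j in the variable x_i is at most δ_i for 1 ≤ i ≤ m. Let f : K^m → K^r be the map f = (f₁, …, f_r). If the K-span of f₁, …, f_r in K[x₁, …, x_m] has dimension at least δ, and #K ≥ 1 + max(δ₁, …, δ_m), then there exist points u₁, …, u_δ ∈ K^m such that f(u₁), …, f(u_δ) are linearly independent vectors in K^r. -/
/-!
Restrict everything to a finite grid `∏ i, Sᵢ` with `#Sᵢ = δᵢ + 1`. By the Combinatorial
Nullstellensatz, a polynomial of degree at most `δᵢ` in each `xᵢ` that vanishes on the grid is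
zero, so evaluation on the grid is injective on the span of the `fⱼ`. Hence the matrix
`(fⱼ(u))_{u, j}` has column rank at least `δ`; its row rank is the same, so `δ` of its rows,
i.e. `δ` of the vectors `f(u)`, are linearly independent.
-/

open MvPolynomial Module Submodule Set

universe u

theorem finrank_span_range_swap {K m n : Type*} [Field K] [Finite m] [Fintype n]
    (v : m → n → K) :
    finrank K (span K (range (Function.swap v))) = finrank K (span K (range v)) :=
  (Matrix.of v).rank_eq_finrank_span_cols.symm.trans (Matrix.of v).rank_eq_finrank_span_row

theorem rank_span_range_comp {R : Type*} {V W : Type u} {ι : Type*} [Ring R] [AddCommGroup V]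
    [Module R V] [AddCommGroup W] [Module R W] (E : V →ₗ[R] W) (f : ι → V)
    (hE : Disjoint (span R (range f)) (LinearMap.ker E)) :
    Module.rank R (span R (range (E ∘ f))) = Module.rank R (span R (range f)) := by
  rw [range_comp, ← Submodule.map_span, ← LinearMap.range_domRestrict]
  exact rank_range_of_injective _ (LinearMap.injective_domRestrict_iff.mpr hE)

theorem exists_linearIndependent_comp_of_le_rank {K V ι : Type*} [DivisionRing K]
    [AddCommGroup V] [Module K V] (v : ι → V) {δ : ℕ}
    (h : (δ : Cardinal) ≤ Module.rank K (span K (range v))) :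
    ∃ u : Fin δ → ι, LinearIndependent K (v ∘ u) := by
  obtain ⟨κ, a, -, hspan, hli⟩ := exists_linearIndependent' K v
  rw [← hspan, rank_span hli] at h
  obtain ⟨e⟩ : Nonempty (Fin δ ↪ range (v ∘ a)) := Cardinal.lift_mk_le'.mp (by simpa using h)
  let e' := e.trans (Equiv.ofInjective _ hli.injective).symm.toEmbedding
  exact ⟨a ∘ e', hli.comp e' e'.injective⟩

namespace MvPolynomial

variable {σ R : Type*}

section CommSemiring

variable [CommSemiring R]

variable (R) in
noncomputable def restrictDegreeOf (n : σ → ℕ) : Submodule R (MvPolynomial σ R) :=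
  restrictSupport R {d | ∀ i, d i ≤ n i}

theorem mem_restrictDegreeOf_iff {n : σ → ℕ} {p : MvPolynomial σ R} :
    p ∈ restrictDegreeOf R n ↔ ∀ i, p.degreeOf i ≤ n i := by
  simp only [restrictDegreeOf, mem_restrictSupport_iff, degreeOf_le_iff, Set.subset_def,
    Finset.mem_coe, Set.mem_ofPred_eq]
  exact ⟨fun h i d hd => h d hd i, fun h d hd i => h i d hd⟩

noncomputable def evalGrid [Fintype σ] [DecidableEq σ] (S : σ → Finset R) :
    MvPolynomial σ R →ₗ[R] (Fintype.piFinset S → R) :=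
  LinearMap.pi fun x => (aeval (x : σ → R)).toLinearMap

end CommSemiring

theorem disjoint_restrictDegreeOf_ker_evalGrid [CommRing R] [IsDomain R] [Fintype σ]
    [DecidableEq σ] {n : σ → ℕ} {S : σ → Finset R} (hS : ∀ i, n i < (S i).card) :
    Disjoint (restrictDegreeOf R n) (LinearMap.ker (evalGrid S)) := by
  refine Submodule.disjoint_def.mpr fun p hp hker => ?_
  refine eq_zero_of_eval_zero_at_prod_finset p S
    (fun i => (mem_restrictDegreeOf_iff.mp hp i).trans_lt (hS i)) fun x hx => ?_
  exact congrFun (LinearMap.mem_ker.mp hker) ⟨x, Fintype.mem_piFinset.mpr hx⟩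

end MvPolynomial

theorem stmt_4_general {K : Type*} [Field K] {r m δ : ℕ}
    (δi : Fin m → ℕ) (f : Fin r → MvPolynomial (Fin m) K)
    (hdeg : ∀ j i, (f j).degreeOf i ≤ δi i)
    (hcard : ∀ i, ((δi i : Cardinal) + 1) ≤ Cardinal.mk K)
    (hspan : (δ : Cardinal) ≤ Module.rank K (Submodule.span K (Set.range f))) :
    ∃ u : Fin δ → (Fin m → K),
      LinearIndependent K (fun t : Fin δ => (fun j : Fin r => MvPolynomial.eval (u t) (f j))) := by
  choose S hS using fun i =>
    Cardinal.exists_finset_eq_card (n := δi i + 1) (by exact_mod_cast hcard i)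
  let A : Fintype.piFinset S → Fin r → K := fun x j => eval (x : Fin m → K) (f j)
  have hdisj : Disjoint (span K (range f)) (LinearMap.ker (evalGrid S)) :=
    (disjoint_restrictDegreeOf_ker_evalGrid fun i => hS i ▸ Nat.lt_add_one _).mono_left
      (span_le.mpr (range_subset_iff.mpr fun j => mem_restrictDegreeOf_iff.mpr (hdeg j)))
  have hA : evalGrid S ∘ f = Function.swap A := rfl
  have hrank : (δ : Cardinal) ≤ Module.rank K (span K (range A)) := by
    rwa [← finrank_eq_rank (R := K), ← finrank_span_range_swap, finrank_eq_rank, ← hA,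
      rank_span_range_comp _ _ hdisj]
  obtain ⟨u, hu⟩ := exists_linearIndependent_comp_of_le_rank A hrank
  exact ⟨Subtype.val ∘ u, hu⟩

/-- If `f₁,…,f_r` are polynomials over `K` of degree at most `δᵢ` in each
variable `xᵢ`, their span has dimension at least `δ`, and `#K ≥ 1 + max δᵢ`, then there
are `δ` points of `K^m` at which the value vectors `(f₁(u),…,f_r(u))` are linearly
independent in `K^r`. -/
theorem stmt_4 {K : Type*} [Field K] {r m δ : ℕ}
    (hr : 1 ≤ r) (hm : 1 ≤ m) (hδ : 1 ≤ δ)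
    (δi : Fin m → ℕ) (f : Fin r → MvPolynomial (Fin m) K)
    (hdeg : ∀ j i, (f j).degreeOf i ≤ δi i)
    (hcard : ∀ i, ((δi i : Cardinal) + 1) ≤ Cardinal.mk K)
    (hspan : (δ : Cardinal) ≤ Module.rank K (Submodule.span K (Set.range f))) :
    ∃ u : Fin δ → (Fin m → K),
      LinearIndependent K (fun t : Fin δ => (fun j : Fin r => MvPolynomial.eval (u t) (f j))) :=
  stmt_4_general δi f hdeg hcard hspan
end

section
/- For integers n ≥ 2 and k ≥ 2, the number of Hall sequences in 𝒜(n,k) equals Σ_{m=1}^{n−1} m·C(k+m−2, k−2), which equals (k−1)·C(k+n−2, k). -/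
open Finset

private lemma gap_lemma {i N : ℕ} {g : Fin i → Fin N} (hg : StrictMono g) (d : ℕ) :
    ∀ a b : Fin i, (b : ℕ) = (a : ℕ) + d → (g a : ℕ) + d ≤ (g b : ℕ) := by
  induction d with
  | zero =>
    intro a b h
    have : a = b := Fin.ext (by omega)
    subst this; omega
  | succ d ih =>
    intro a b h
    have hb' : (a : ℕ) + d < i := by have := b.2; omega
    have h1 := ih a ⟨(a : ℕ) + d, hb'⟩ rfl
    have h2 : g ⟨(a : ℕ) + d, hb'⟩ < g b := hg (by rw [Fin.lt_def]; simp; omega)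
    rw [Fin.lt_def] at h2
    omega

private def strictEquiv (i N : ℕ) :
    {g : Fin i → Fin N // StrictMono g} ≃ {s : Finset (Fin N) // s.card = i} where
  toFun g := ⟨univ.image g.1, by
    rw [Finset.card_image_of_injective _ g.2.injective, card_univ, Fintype.card_fin]⟩
  invFun s := ⟨⇑(s.1.orderEmbOfFin s.2), (s.1.orderEmbOfFin s.2).strictMono⟩
  left_inv g := by
    apply Subtype.ext
    exact (Finset.orderEmbOfFin_unique _
      (fun x => Finset.mem_image_of_mem _ (mem_univ x)) g.2).symm
  right_inv s := by
    apply Subtype.ext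
    apply Finset.coe_injective
    rw [Finset.coe_image, Finset.coe_univ, Set.image_univ, Finset.range_orderEmbOfFin]

private lemma card_strict (i N : ℕ) :
    Nat.card {g : Fin i → Fin N // StrictMono g} = N.choose i := by
  rw [Nat.card_congr (strictEquiv i N), Nat.card_eq_fintype_card,
    Fintype.card_finset_len, Fintype.card_fin]

private def monoEquiv (i m : ℕ) :
    {f : Fin i → Fin (m + 1) // Monotone f} ≃ {g : Fin i → Fin (m + i) // StrictMono g} where
  toFun f := ⟨fun t => ⟨(f.1 t : ℕ) + t, by have h1 := (f.1 t).2; have h2 := t.2; omega⟩, by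
    intro a b hab
    have h1 : (f.1 a : ℕ) ≤ f.1 b := f.2 hab.le
    have h2 : (a : ℕ) < b := hab
    rw [Fin.lt_def]
    simp only
    omega⟩
  invFun g := ⟨fun t => ⟨(g.1 t : ℕ) - t, by
      have hl : (t : ℕ) < i := t.2
      have h1 := gap_lemma g.2 ((i - 1) - t) t ⟨i - 1, by omega⟩ (by simp; omega)
      have h2 := (g.1 ⟨i - 1, by omega⟩).2
      omega⟩, by
    intro a b hab
    have h0 : (a : ℕ) ≤ b := hab
    have h1 := gap_lemma g.2 ((b : ℕ) - a) a b (by omega)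
    rw [Fin.le_def]
    simp only
    omega⟩
  left_inv f := by
    apply Subtype.ext
    funext t
    apply Fin.ext
    simp
  right_inv g := by
    apply Subtype.ext
    funext t
    apply Fin.ext
    have h1 := gap_lemma g.2 (t : ℕ) ⟨0, t.pos⟩ t (by simp)
    simp only
    omega

private def antiEquiv (i n : ℕ) :
    {f : Fin i → Fin n // Antitone f} ≃ {f : Fin i → Fin n // Monotone f} where
  toFun f := ⟨f.1 ∘ Fin.rev, fun a b h => f.2 (Fin.rev_le_rev.mpr h)⟩
  invFun f := ⟨f.1 ∘ Fin.rev, fun a b h => f.2 (Fin.rev_le_rev.mpr h)⟩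
  left_inv f := by
    apply Subtype.ext
    funext t
    simp [Fin.rev_rev]
  right_inv f := by
    apply Subtype.ext
    funext t
    simp [Fin.rev_rev]

private lemma card_anti (i m : ℕ) :
    Nat.card {f : Fin i → Fin (m + 1) // Antitone f} = (m + i).choose i := by
  rw [Nat.card_congr ((antiEquiv i (m + 1)).trans (monoEquiv i m)), card_strict]

private def splitEquiv (j N : ℕ) :
    {f : Fin (j + 2) → Fin (N + 1) //
      ∀ a b : Fin (j + 2), a ≤ b → (b : ℕ) < j + 2 - 1 → f b ≤ f a} ≃
    {g : Fin (j + 1) → Fin (N + 1) // Antitone g} × Fin (N + 1) where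
  toFun f := (⟨fun t => f.1 t.castSucc, by
      intro a b hab
      refine f.2 _ _ (by rwa [Fin.castSucc_le_castSucc_iff]) ?_
      have := b.2
      simp only [Fin.coe_castSucc]
      omega⟩, f.1 (Fin.last (j + 1)))
  invFun g := ⟨Fin.snoc g.1.1 g.2, by
    intro a b hab hblt
    have hb : (b : ℕ) < j + 1 := by omega
    have ha : (a : ℕ) < j + 1 := by have := Fin.le_def.mp hab; omega
    have hb' : b = Fin.castSucc ⟨(b : ℕ), hb⟩ := Fin.ext rfl
    have ha' : a = Fin.castSucc ⟨(a : ℕ), ha⟩ := Fin.ext rfl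
    rw [hb', ha', Fin.snoc_castSucc, Fin.snoc_castSucc]
    exact g.1.2 (show (⟨(a : ℕ), ha⟩ : Fin (j + 1)) ≤ ⟨(b : ℕ), hb⟩ from hab)⟩
  left_inv f := Subtype.ext (Fin.snoc_init_self f.1)
  right_inv g := by
    refine Prod.ext ?_ ?_
    · apply Subtype.ext
      funext t
      simp [Fin.snoc_castSucc]
    · simp [Fin.snoc_last]

/-- For `n, k ≥ 2`, the number of Hall sequences in `𝒜(n,k)`, i.e. `k`-tuples
`(i₁,…,i_k)` with entries in `{1,…,n}` whose initial segment `(i₁,…,i_{k−1})` is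
non-increasing and with `i_{k−1} < i_k`, equals `Σ_{m=1}^{n−1} m·C(k+m−2, k−2)`,
which in turn equals `(k−1)·C(k+n−2, k)`. -/
theorem stmt_6 (n k : ℕ) (hn : 2 ≤ n) (hk : 2 ≤ k) :
    Nat.card {f : Fin k → Fin n //
        (∀ a b : Fin k, a ≤ b → (b : ℕ) < k - 1 → f b ≤ f a) ∧
        f ⟨k - 2, by omega⟩ < f ⟨k - 1, by omega⟩}
      = ∑ m ∈ Finset.Icc 1 (n - 1), m * (k + m - 2).choose (k - 2) ∧
    Nat.card {f : Fin k → Fin n //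
        (∀ a b : Fin k, a ≤ b → (b : ℕ) < k - 1 → f b ≤ f a) ∧
        f ⟨k - 2, by omega⟩ < f ⟨k - 1, by omega⟩}
      = (k - 1) * (k + n - 2).choose k := by
  classical
  obtain ⟨j, rfl⟩ : ∃ j, k = j + 2 := ⟨k - 2, by omega⟩
  obtain ⟨N, rfl⟩ : ∃ N, n = N + 1 := ⟨n - 1, by omega⟩
  set C1 := (N + j + 1).choose (j + 1) with hC1
  set C2 := (N + j + 1).choose (j + 2) with hC2
  have hj0 : j < j + 2 := by omega
  have hj1 : j + 1 < j + 2 := by omega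
  have hj2 : j + 2 - 2 < j + 2 := by omega
  have hj3 : j + 2 - 1 < j + 2 := by omega
  have aA : ∀ m : ℕ, (j + 2) + m - 2 = m + j := fun m => by omega
  have aB : (j + 2) - 2 = j := by omega
  have aC : ∀ m : ℕ, m + j - j = m := fun m => by omega
  have aD : N + 1 - 1 = N := by omega
  have aE : j + 1 = 1 + j := by omega
  have aF : N + j + 1 - (j + 1) = N := by omega
  have aG : N + (j + 2) = (N + j + 1) + 1 := by omega
  have aH : (j + 2) + (N + 1) - 2 = N + j + 1 := by omega
  have hcard : Nat.card {f : Fin (j + 2) → Fin (N + 1) //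
      (∀ a b : Fin (j + 2), a ≤ b → (b : ℕ) < j + 2 - 1 → f b ≤ f a) ∧
      f ⟨j + 2 - 2, hj2⟩ < f ⟨j + 2 - 1, hj3⟩}
      = (j + 1) * C2 := by
    set P : (Fin (j + 2) → Fin (N + 1)) → Prop :=
      fun f => ∀ a b : Fin (j + 2), a ≤ b → (b : ℕ) < j + 2 - 1 → f b ≤ f a with hPdef
    have h1 : Nat.card {f : Fin (j + 2) → Fin (N + 1) // P f} = C1 * (N + 1) := by
      rw [Nat.card_congr (splitEquiv j N), Nat.card_prod, card_anti (j + 1) N,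
        Nat.card_eq_fintype_card, Fintype.card_fin, hC1,
        show N + (j + 1) = N + j + 1 from by omega]
    have hiff : ∀ f : Fin (j + 2) → Fin (N + 1),
        (P f ∧ f ⟨j + 1, hj1⟩ ≤ f ⟨j, hj0⟩) ↔ Antitone f := by
      intro f
      constructor
      · rintro ⟨hP, hle⟩ a b hab
        rcases lt_or_ge (b : ℕ) (j + 1) with hb | hb
        · exact hP a b hab (by omega)
        · have hb' : b = ⟨j + 1, hj1⟩ := Fin.ext (show (b : ℕ) = j + 1 by have := b.2; omega)
          by_cases haj : (a : ℕ) = j + 1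
          · have : a = b := Fin.ext (by rw [hb']; exact haj)
            rw [this]
          · have ha' : (a : ℕ) ≤ j := by have := Fin.le_def.mp hab; have := b.2; omega
            calc f b = f ⟨j + 1, hj1⟩ := by rw [hb']
              _ ≤ f ⟨j, hj0⟩ := hle
              _ ≤ f a := hP a ⟨j, hj0⟩ (by rw [Fin.le_def]; exact ha')
                  (by show j < j + 2 - 1; omega)
      · intro h
        exact ⟨fun a b hab _ => h hab, h (by rw [Fin.le_def]; show j ≤ j + 1; omega)⟩
    have h2 : Nat.card {f : Fin (j + 2) → Fin (N + 1) //
        P f ∧ f ⟨j + 1, hj1⟩ ≤ f ⟨j, hj0⟩} = (N + (j + 2)).choose (j + 2) := by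
      rw [Nat.card_congr (Equiv.subtypeEquivRight hiff)]
      exact card_anti (j + 2) N
    have hsplit : Nat.card {f : Fin (j + 2) → Fin (N + 1) //
          P f ∧ f ⟨j + 2 - 2, hj0⟩ < f ⟨j + 2 - 1, hj1⟩}
        + Nat.card {f : Fin (j + 2) → Fin (N + 1) //
          P f ∧ f ⟨j + 1, hj1⟩ ≤ f ⟨j, hj0⟩}
        = Nat.card {f : Fin (j + 2) → Fin (N + 1) // P f} := by
      have E : {f : Fin (j + 2) → Fin (N + 1) //
            P f ∧ f ⟨j + 2 - 2, hj0⟩ < f ⟨j + 2 - 1, hj1⟩}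
          ⊕ {f : Fin (j + 2) → Fin (N + 1) //
            P f ∧ f ⟨j + 1, hj1⟩ ≤ f ⟨j, hj0⟩}
          ≃ {f : Fin (j + 2) → Fin (N + 1) // P f} := by
        refine Equiv.trans (Equiv.sumCongr
          ((Equiv.subtypeSubtypeEquivSubtypeInter P _).symm)
          ((Equiv.subtypeSubtypeEquivSubtypeInter P _).symm)) ?_
        refine Equiv.trans (Equiv.sumCongr (Equiv.refl _)
          (Equiv.subtypeEquivRight fun x => ?_)) (Equiv.sumCompl _)
        exact not_lt.symm
      rw [← Nat.card_congr E, Nat.card_sum]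
    have i1 : C1 * N = C2 * (j + 2) := by
      have h := Nat.choose_succ_right_eq (N + j + 1) (j + 1)
      rw [aF] at h
      rw [hC1, hC2]
      exact h.symm
    have i2 : (N + (j + 2)).choose (j + 2) = C1 + C2 := by
      rw [aG, Nat.choose_succ_succ, hC1, hC2]
    have key : C1 * (N + 1) = (j + 1) * C2 + (C1 + C2) := by
      calc C1 * (N + 1) = C1 * N + C1 := by ring
        _ = C2 * (j + 2) + C1 := by rw [i1]
        _ = (j + 1) * C2 + (C1 + C2) := by ring
    rw [h2, i2, h1, key] at hsplit
    exact Nat.add_right_cancel hsplit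
  have hsum : (∑ m ∈ Finset.Icc 1 (N + 1 - 1), m * ((j + 2) + m - 2).choose ((j + 2) - 2))
      = (j + 1) * C2 := by
    have step1 : ∀ m ∈ Finset.Icc 1 (N + 1 - 1),
        m * ((j + 2) + m - 2).choose ((j + 2) - 2) = (j + 1) * (m + j).choose (j + 1) := by
      intro m _
      rw [aA m, aB]
      have h := Nat.choose_succ_right_eq (m + j) j
      rw [aC m] at h
      rw [mul_comm m, mul_comm (j + 1)]
      exact h.symm
    rw [Finset.sum_congr rfl step1, ← Finset.mul_sum]
    congr 1
    rw [hC2, show j + 2 = j + 1 + 1 from rfl, ← Nat.sum_Icc_choose (N + j) (j + 1),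
      aD, aE, ← Finset.map_add_right_Icc 1 N j, Finset.sum_map]
    apply Finset.sum_congr rfl
    intro x _
    simp [addRightEmbedding_apply]
  refine ⟨hcard.trans hsum.symm, ?_⟩
  rw [aH]
  exact hcard
end

section
/- Let B be an r × r skew-symmetric matrix with entries in R = 𝒪/𝔭^d, where 𝒪 is the ring of integers of a p-adic field with maximal ideal 𝔭, residue field of cardinality p^f. Suppose some entry of B has level ℓ (i.e. lies in 𝔭^ℓ/𝔭^d but not 𝔭^{ℓ+1}/𝔭^d, with level d meaning the entry is zero). Then the kernel of B acting on R^{⊕r} has cardinality at most p^{fd(r−2) + 2fℓ}. -/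
/-!
Restricting a kernel vector of `B` to the coordinates outside `{i, j}` leaves at most
`#R ^ (r - 2)` possibilities. Two kernel vectors with the same restriction differ by a kernel
vector supported on `{i, j}`, and rows `i` and `j` of `B` (zero diagonal, `Bⱼᵢ = -Bᵢⱼ`) put both
of its coordinates in the annihilator of `b = Bᵢⱼ`. If `b` has level `ℓ`, that annihilator is
`𝔭^(d-ℓ)/𝔭^d`, which has `q^ℓ` elements, `q = p^f`.
-/

open IsLocalRing

theorem AddMonoidHom.card_le_card_mul_card_ker {G H : Type*} [AddGroup G] [AddGroup H]
    [Finite H] (φ : G →+ H) : Nat.card G ≤ Nat.card H * Nat.card φ.ker := by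
  rw [← φ.ker.card_mul_index, AddSubgroup.index_ker φ, mul_comm]
  exact Nat.mul_le_mul_right _ (Finite.card_subtype_le _)

theorem Nat.card_subtype_ne_and_ne {n : Type*} [Fintype n] {i j : n} (hij : i ≠ j) :
    Nat.card {k // k ≠ i ∧ k ≠ j} = Fintype.card n - 2 := by
  classical
  rw [Nat.card_eq_fintype_card, Fintype.card_subtype, ← Finset.card_pair hij,
    ← Finset.card_compl]
  congr 1
  ext
  simp

namespace Matrix

variable {n R : Type*} [Fintype n] [CommRing R]

theorem mul_eq_zero_of_mulVec_eq_zero_of_support {B : Matrix n n R} (hskew : Bᵀ = -B)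
    (hdiag : ∀ i, B i i = 0) {i j : n} (hij : i ≠ j) {x : n → R} (hx : B *ᵥ x = 0)
    (hsupp : ∀ k, k ≠ i ∧ k ≠ j → x k = 0) : B i j * x i = 0 ∧ B i j * x j = 0 := by
  have hrow : ∀ m, B m i * x i + B m j * x j = 0 := fun m => by
    have hm := congrFun hx m
    rwa [mulVec, dotProduct,
      Fintype.sum_eq_add i j hij fun k hk => by rw [hsupp k hk, mul_zero]] at hm
  have hji : B j i = -B i j := congrFun₂ hskew i j
  constructor
  · simpa [hji, hdiag] using hrow j
  · simpa [hdiag] using hrow i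

theorem card_ker_mulVec_le_of_skew [Finite R] {B : Matrix n n R} (hskew : Bᵀ = -B)
    (hdiag : ∀ i, B i i = 0) (i j : n) :
    Nat.card {x : n → R // B *ᵥ x = 0} ≤
      Nat.card R ^ (Fintype.card n - 2) * Nat.card {y : R // B i j * y = 0} ^ 2 := by
  by_cases hij : i = j
  · subst hij
    calc Nat.card {x : n → R // B *ᵥ x = 0} ≤ Nat.card (n → R) := Finite.card_subtype_le _
      _ = Nat.card R ^ Fintype.card n := by rw [Nat.card_fun, Nat.card_eq_fintype_card (α := n)]
      _ ≤ Nat.card R ^ (Fintype.card n - 2 + 2) := Nat.pow_le_pow_right Nat.card_pos (by omega)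
      _ = _ := by simp [hdiag, pow_add]
  let K := B.mulVecLin.toAddMonoidHom.ker
  let S := {k // k ≠ i ∧ k ≠ j}
  let restrict : K →+ (S → R) := AddMonoidHom.mk' (fun x s => x.1 s.1) fun _ _ => rfl
  have hker : Nat.card restrict.ker ≤ Nat.card {y : R // B i j * y = 0} ^ 2 := by
    have hsupp (x : restrict.ker) (k : n) (hk : k ≠ i ∧ k ≠ j) : x.1.1 k = 0 :=
      congrFun x.2 ⟨k, hk⟩
    have hann (x : restrict.ker) :=
      mul_eq_zero_of_mulVec_eq_zero_of_support hskew hdiag hij x.1.2 (hsupp x)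
    let pair (x : restrict.ker) : {y : R // B i j * y = 0} × {y : R // B i j * y = 0} :=
      (⟨x.1.1 i, (hann x).1⟩, ⟨x.1.1 j, (hann x).2⟩)
    have hpair : Function.Injective pair := fun x x' h => by
      simp only [pair, Prod.mk.injEq, Subtype.mk.injEq] at h
      ext k
      by_cases hki : k = i
      · exact hki ▸ h.1
      by_cases hkj : k = j
      · exact hkj ▸ h.2
      rw [hsupp x k ⟨hki, hkj⟩, hsupp x' k ⟨hki, hkj⟩]
    rw [sq, ← Nat.card_prod]
    exact Nat.card_le_card_of_injective pair hpair
  calc Nat.card {x : n → R // B *ᵥ x = 0} = Nat.card K := rfl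
    _ ≤ Nat.card (S → R) * Nat.card restrict.ker := restrict.card_le_card_mul_card_ker
    _ ≤ _ := by
      rw [Nat.card_fun, Nat.card_subtype_ne_and_ne hij]
      exact Nat.mul_le_mul_left _ hker

end Matrix

section DiscreteValuationRing

variable {O : Type*} [CommRing O] [IsDomain O] [IsDiscreteValuationRing O]

theorem mul_mem_maximalIdeal_pow_iff {ℓ d : ℕ} (hℓ : ℓ ≤ d) {a : O}
    (ha : a ∈ maximalIdeal O ^ ℓ) (ha' : a ∉ maximalIdeal O ^ (ℓ + 1)) (x : O) :
    a * x ∈ maximalIdeal O ^ d ↔ x ∈ maximalIdeal O ^ (d - ℓ) := by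
  obtain ⟨π, hπ⟩ := IsDiscreteValuationRing.exists_irreducible O
  have hmem : ∀ n (y : O), y ∈ maximalIdeal O ^ n ↔ π ^ n ∣ y := fun n y => by
    rw [hπ.maximalIdeal_eq, Ideal.span_singleton_pow, Ideal.mem_span_singleton]
  obtain ⟨c, rfl⟩ := (hmem ℓ a).1 ha
  have hc : IsUnit c := by
    by_contra hc
    obtain ⟨e, rfl⟩ := (hmem 1 c).1 (by rwa [pow_one, mem_maximalIdeal, mem_nonunits_iff])
    exact ha' ((hmem _ _).2 ⟨e, by ring⟩)
  rw [hmem, hmem, ← Nat.add_sub_cancel' hℓ, pow_add, Nat.add_sub_cancel_left, mul_assoc,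
    mul_dvd_mul_iff_left (pow_ne_zero ℓ hπ.ne_zero), hc.dvd_mul_left]

theorem mul_eq_zero_iff_mem_map_maximalIdeal_pow {ℓ d : ℕ} (hℓ : ℓ ≤ d)
    {b : O ⧸ maximalIdeal O ^ d}
    (hb₁ : b ∈ (maximalIdeal O ^ ℓ).map (Ideal.Quotient.mk (maximalIdeal O ^ d)))
    (hb₂ : ℓ < d → b ∉ (maximalIdeal O ^ (ℓ + 1)).map (Ideal.Quotient.mk (maximalIdeal O ^ d)))
    (x : O ⧸ maximalIdeal O ^ d) :
    b * x = 0 ↔ x ∈ (maximalIdeal O ^ (d - ℓ)).map (Ideal.Quotient.mk (maximalIdeal O ^ d)) := by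
  rcases hℓ.lt_or_eq with hlt | rfl
  · obtain ⟨a, ha, rfl⟩ :=
      (Ideal.mem_map_iff_of_surjective _ Ideal.Quotient.mk_surjective).1 hb₁
    have ha' : a ∉ maximalIdeal O ^ (ℓ + 1) := fun h => hb₂ hlt (Ideal.mem_map_of_mem _ h)
    obtain ⟨x, rfl⟩ := Ideal.Quotient.mk_surjective x
    rw [← map_mul, Ideal.Quotient.eq_zero_iff_mem, mul_mem_maximalIdeal_pow_iff hℓ ha ha',
      Ideal.mem_quotient_iff_mem (Ideal.pow_le_pow_right (Nat.sub_le d ℓ))]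
  · rw [Ideal.map_quotient_self, Ideal.mem_bot] at hb₁
    simp [hb₁, Ideal.map_top]

theorem card_quotient_maximalIdeal_pow (k : ℕ) :
    Nat.card (O ⧸ maximalIdeal O ^ k) = Nat.card (ResidueField O) ^ k := by
  have := cardQuot_pow_of_prime (S := O) (IsDiscreteValuationRing.not_a_field O) (i := k)
  rwa [Submodule.cardQuot_apply, Submodule.cardQuot_apply] at this

theorem card_map_maximalIdeal_pow [Finite (ResidueField O)] {m d : ℕ} (hmd : m ≤ d) :
    Nat.card ((maximalIdeal O ^ m).map (Ideal.Quotient.mk (maximalIdeal O ^ d))) =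
      Nat.card (ResidueField O) ^ (d - m) := by
  have h := Submodule.card_quotient_mul_card_quotient (maximalIdeal O ^ m) (maximalIdeal O ^ d)
    (Ideal.pow_le_pow_right hmd)
  rw [card_quotient_maximalIdeal_pow, card_quotient_maximalIdeal_pow] at h
  rw [Ideal.map_eq_submodule_map]
  refine Nat.eq_of_mul_eq_mul_right (pow_pos (Nat.card_pos (α := ResidueField O)) m) ?_
  rw [← pow_add, Nat.sub_add_cancel hmd, ← h]
  rfl

theorem card_annihilator_of_level [Finite (ResidueField O)] {ℓ d : ℕ} (hℓ : ℓ ≤ d)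
    {b : O ⧸ maximalIdeal O ^ d}
    (hb₁ : b ∈ (maximalIdeal O ^ ℓ).map (Ideal.Quotient.mk (maximalIdeal O ^ d)))
    (hb₂ : ℓ < d → b ∉ (maximalIdeal O ^ (ℓ + 1)).map (Ideal.Quotient.mk (maximalIdeal O ^ d))) :
    Nat.card {x : O ⧸ maximalIdeal O ^ d // b * x = 0} = Nat.card (ResidueField O) ^ ℓ := by
  rw [Nat.card_congr <| Equiv.subtypeEquivRight <|
    mul_eq_zero_iff_mem_map_maximalIdeal_pow hℓ hb₁ hb₂]
  exact (card_map_maximalIdeal_pow (Nat.sub_le d ℓ)).trans (by rw [Nat.sub_sub_self hℓ])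

end DiscreteValuationRing

theorem stmt_10_general (p f d r ℓ : ℕ) (hp : p.Prime) (hℓ : ℓ ≤ d)
    {O : Type*} [CommRing O] [IsDomain O] [IsDiscreteValuationRing O]
    (hres : Nat.card (ResidueField O) = p ^ f)
    (B : Matrix (Fin r) (Fin r) (O ⧸ (maximalIdeal O) ^ d))
    (hskew : B.transpose = -B) (hdiag : ∀ i, B i i = 0)
    (i j : Fin r)
    (hlev₁ : B i j ∈ Ideal.map (Ideal.Quotient.mk ((maximalIdeal O) ^ d))
      ((maximalIdeal O) ^ ℓ))
    (hlev₂ : ℓ < d → B i j ∉ Ideal.map (Ideal.Quotient.mk ((maximalIdeal O) ^ d))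
      ((maximalIdeal O) ^ (ℓ + 1))) :
    Nat.card {x : Fin r → O ⧸ (maximalIdeal O) ^ d // B.mulVec x = 0}
      ≤ p ^ (f * d * (r - 2) + 2 * f * ℓ) := by
  have hcard : Nat.card (O ⧸ maximalIdeal O ^ d) = (p ^ f) ^ d := by
    rw [card_quotient_maximalIdeal_pow, hres]
  have : Finite (ResidueField O) :=
    Nat.finite_of_card_ne_zero (hres ▸ pow_ne_zero f hp.ne_zero)
  have : Finite (O ⧸ maximalIdeal O ^ d) :=
    Nat.finite_of_card_ne_zero (hcard ▸ pow_ne_zero _ (pow_ne_zero f hp.ne_zero))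
  calc Nat.card {x : Fin r → O ⧸ maximalIdeal O ^ d // B.mulVec x = 0}
      ≤ Nat.card (O ⧸ maximalIdeal O ^ d) ^ (Fintype.card (Fin r) - 2) *
          Nat.card {y // B i j * y = 0} ^ 2 := B.card_ker_mulVec_le_of_skew hskew hdiag i j
    _ = ((p ^ f) ^ d) ^ (r - 2) * ((p ^ f) ^ ℓ) ^ 2 := by
      rw [hcard, card_annihilator_of_level hℓ hlev₁ hlev₂, hres, Fintype.card_fin]
    _ = p ^ (f * d * (r - 2) + 2 * f * ℓ) := by ring

/-- Let `O` be the ring of integers of a `p`-adic field (formalized as a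
complete discrete valuation ring) with maximal ideal `𝔭` and residue field of
cardinality `p^f`, and let `R = O/𝔭^d`.  If `B` is an `r × r` skew-symmetric matrix
over `R` having an entry of level `ℓ`, then `#ker B ≤ p^{fd(r−2) + 2fℓ}`. -/
theorem stmt_10 (p f d r ℓ : ℕ) (hp : p.Prime) (hf : 0 < f) (hd : 0 < d) (hℓ : ℓ ≤ d)
    {O : Type*} [CommRing O] [IsDomain O] [IsDiscreteValuationRing O]
    [IsAdicComplete (maximalIdeal O) O]
    (hres : Nat.card (ResidueField O) = p ^ f)
    (B : Matrix (Fin r) (Fin r) (O ⧸ (maximalIdeal O) ^ d))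
    (hskew : B.transpose = -B) (hdiag : ∀ i, B i i = 0)
    (i j : Fin r)
    (hlev₁ : B i j ∈ Ideal.map (Ideal.Quotient.mk ((maximalIdeal O) ^ d))
      ((maximalIdeal O) ^ ℓ))
    (hlev₂ : ℓ < d → B i j ∉ Ideal.map (Ideal.Quotient.mk ((maximalIdeal O) ^ d))
      ((maximalIdeal O) ^ (ℓ + 1))) :
    Nat.card {x : Fin r → O ⧸ (maximalIdeal O) ^ d // B.mulVec x = 0}
      ≤ p ^ (f * d * (r - 2) + 2 * f * ℓ) :=
  stmt_10_general p f d r ℓ hp hℓ hres B hskew hdiag i j hlev₁ hlev₂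
end

section
/- Let R be a finite commutative ring, ψ : R → ℂ* a primitive additive character (i.e. its kernel contains no nonzero ideal of R), and 𝔞 ⊆ R an ideal. Then the map R/Ann(𝔞) → Hom(𝔞, ℂ*) sending b + Ann(𝔞) to the character x ↦ ψ(bx) is a group isomorphism, where Ann(𝔞) = {r ∈ R : r𝔞 = 0}. -/
/-!
The pairing `(b + Ann 𝔞, x) ↦ ψ (b * x)` between `R ⧸ Ann 𝔞` and `𝔞` is nondegenerate on both
sides: if `ψ (b * 𝔞) = 1` then the ideal `b𝔞` lies in the kernel of `ψ`, so `b𝔞 = 0`; if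
`ψ (R * x) = 1` then likewise `Rx = 0`. Each side therefore embeds into the character group of
the other, and a finite abelian group has as many `ℂˣ`-valued characters as elements, so
`|R ⧸ Ann 𝔞| ≤ |𝔞| ≤ |R ⧸ Ann 𝔞|` and the embedding `R ⧸ Ann 𝔞 → Hom(𝔞, ℂˣ)` is bijective.
-/

open Function Submodule

namespace AddChar

section Flip

variable {G H M : Type*} [AddCommMonoid G] [AddCommMonoid H] [CommMonoid M]

def flip (f : AddChar G (AddChar H M)) : AddChar H (AddChar G M) where
  toFun h :=
    { toFun g := f g h
      map_zero_eq_one' := by simp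
      map_add_eq_mul' g g' := by simp [map_add_eq_mul] }
  map_zero_eq_one' := by ext; simp
  map_add_eq_mul' h h' := by ext; simp [map_add_eq_mul]

@[simp] lemma flip_apply (f : AddChar G (AddChar H M)) (h : H) (g : G) : f.flip h g = f g h := rfl

end Flip

lemma injective_of_eq_one {G N : Type*} [AddCommGroup G] [CommGroup N] (f : AddChar G N)
    (hf : ∀ g, f g = 1 → g = 0) : Injective f := fun g g' h ↦
  sub_eq_zero.1 <| hf _ <| by rw [map_sub_eq_div, h, div_self']

def unitsMulEquiv (α M : Type*) [AddGroup α] [CommMonoid M] : AddChar α Mˣ ≃* AddChar α M :=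
  toMonoidHomMulEquiv.trans <| MonoidHom.toHomUnitsMulEquiv.symm.trans toMonoidHomMulEquiv.symm

section Complex

variable {α : Type*} [AddCommGroup α] [Finite α]

instance : Finite (AddChar α ℂˣ) := .of_equiv _ (unitsMulEquiv α ℂ).symm.toEquiv

lemma natCard_units_complex : Nat.card (AddChar α ℂˣ) = Nat.card α := by
  have := Fintype.ofFinite α
  rw [Nat.card_congr (unitsMulEquiv α ℂ).toEquiv, Nat.card_eq_fintype_card, card_eq,
    Nat.card_eq_fintype_card]

end Complex

theorem bijective_of_nondegenerate {G H : Type*} [AddCommGroup G] [AddCommGroup H] [Finite G]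
    [Finite H] (f : AddChar G (AddChar H ℂˣ)) (hf : ∀ g, f g = 1 → g = 0)
    (hflip : ∀ h, f.flip h = 1 → h = 0) : Bijective f := by
  have hinj := f.injective_of_eq_one hf
  refine (Nat.bijective_iff_injective_and_card f).2 ⟨hinj, le_antisymm ?_ ?_⟩
  · exact Nat.card_le_card_of_injective _ hinj
  · calc Nat.card (AddChar H ℂˣ) = Nat.card H := natCard_units_complex
      _ ≤ Nat.card (AddChar G ℂˣ) :=
        Nat.card_le_card_of_injective _ (f.flip.injective_of_eq_one hflip)
      _ = Nat.card G := natCard_units_complex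

section Annihilator

variable {R M : Type*} [CommRing R] [CommMonoid M] (ψ : AddChar R M) (a : Ideal R)

def restrictMulShift : AddChar R (AddChar a M) where
  toFun b := (ψ.mulShift b).compAddMonoidHom a.subtype.toAddMonoidHom
  map_zero_eq_one' := by ext; simp
  map_add_eq_mul' b c := by ext; simp [add_mul, map_add_eq_mul]

lemma restrictMulShift_eq_one {b : R} (hb : b ∈ annihilator a) : ψ.restrictMulShift a b = 1 := by
  ext x
  have hbx : b * x = 0 := mem_annihilator.1 hb x x.2
  simp [restrictMulShift, hbx]

def annihilatorPairing : AddChar (R ⧸ annihilator a) (AddChar a M) :=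
  toAddMonoidHomEquiv.symm <| QuotientAddGroup.lift (annihilator a).toAddSubgroup
    (ψ.restrictMulShift a).toAddMonoidHom
    fun _ hb ↦ congrArg Additive.ofMul (ψ.restrictMulShift_eq_one a hb)

@[simp] lemma annihilatorPairing_mk (b : R) (x : a) :
    ψ.annihilatorPairing a (Ideal.Quotient.mk _ b) x = ψ (b * x) := rfl

variable {ψ} (hprim : ∀ I : Ideal R, (∀ x ∈ I, ψ x = 1) → I = ⊥)
include hprim

lemma mem_annihilator_of_forall_mul_eq_one {b : R} (hb : ∀ x ∈ a, ψ (b * x) = 1) :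
    b ∈ annihilator a := by
  have hba : Submodule.map (LinearMap.mul R R b) a = ⊥ := hprim _ fun y hy ↦ by
    obtain ⟨x, hx, rfl⟩ := mem_map.1 hy
    exact hb x hx
  exact mem_annihilator.2 fun x hx ↦ by
    simpa [hba] using mem_map_of_mem (f := LinearMap.mul R R b) hx

lemma eq_zero_of_forall_mul_eq_one {x : R} (hx : ∀ b, ψ (b * x) = 1) : x = 0 :=
  Ideal.span_singleton_eq_bot.1 <| hprim _ fun y hy ↦ by
    obtain ⟨b, rfl⟩ := Ideal.mem_span_singleton'.1 hy
    exact hx b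

lemma eq_zero_of_annihilatorPairing_eq_one {q : R ⧸ annihilator a}
    (hq : ψ.annihilatorPairing a q = 1) : q = 0 := by
  obtain ⟨b, rfl⟩ := Ideal.Quotient.mk_surjective q
  refine Ideal.Quotient.eq_zero_iff_mem.2 <|
    mem_annihilator_of_forall_mul_eq_one a hprim fun x hx ↦ ?_
  simpa using DFunLike.congr_fun hq ⟨x, hx⟩

lemma eq_zero_of_annihilatorPairing_flip_eq_one {x : a}
    (hx : (ψ.annihilatorPairing a).flip x = 1) : x = 0 :=
  Subtype.ext <| eq_zero_of_forall_mul_eq_one hprim fun b ↦ by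
    simpa using DFunLike.congr_fun hx (Ideal.Quotient.mk _ b)

end Annihilator

end AddChar

/-- Let `R` be a finite commutative ring, `ψ` a primitive additive
character of `R` (its kernel contains no nonzero ideal), and `𝔞 ⊆ R` an ideal.  Then
`b + Ann(𝔞) ↦ (x ↦ ψ(bx))` is a group isomorphism `R/Ann(𝔞) ≅ Hom(𝔞, ℂ*)`. -/
theorem stmt_11 (R : Type*) [CommRing R] [Fintype R] (ψ : AddChar R ℂˣ)
    (hprim : ∀ I : Ideal R, (∀ x ∈ I, ψ x = 1) → I = ⊥)
    (a : Ideal R) :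
    ∃ e : Multiplicative (R ⧸ (Submodule.annihilator a)) ≃* AddChar a ℂˣ,
      ∀ (b : R) (x : a),
        (e (Multiplicative.ofAdd (Ideal.Quotient.mk (Submodule.annihilator a) b))) x
          = ψ (b * (x : R)) :=
  ⟨.ofBijective (ψ.annihilatorPairing a).toMonoidHom <|
      AddChar.bijective_of_nondegenerate _
        (fun _ ↦ AddChar.eq_zero_of_annihilatorPairing_eq_one a hprim)
        (fun _ ↦ AddChar.eq_zero_of_annihilatorPairing_flip_eq_one a hprim),
    fun _ _ ↦ rfl⟩
end

section
/- Let G be a finite p-group and let ρ₁, …, ρ_k be irreducible complex representations of G with central characters χ₁, …, χ_k. If the restrictions of the χ_i to Ω₁(Z(G)) := {g ∈ Z(G) : g^p = 1} span the dual 𝔽_p-vector space Hom(Ω₁(Z(G)), ℂ*), then the direct sum ρ₁ ⊕ ⋯ ⊕ ρ_k is a faithful representation of G. -/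
/-- The subgroup `Ω₁(A) = {g ∈ A : g^p = 1}` of a commutative group `A`. -/
def Omega1 (p : ℕ) (A : Type*) [CommGroup A] : Subgroup A where
  carrier := {g | g ^ p = 1}
  one_mem' := by simp
  mul_mem' := by
    intro a b ha hb
    simp only [Set.mem_setOf_eq] at *
    rw [mul_pow, ha, hb, one_mul]
  inv_mem' := by
    intro a ha
    simp only [Set.mem_setOf_eq] at *
    rw [inv_pow, ha, inv_one]

open scoped IsMulCommutative

/-! The kernel of `g ↦ (ρᵢ g)ᵢ` is normal in the `p`-group `G`, so if it were nontrivial it would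
contain a central element `z` of order `p`, i.e. `z ∈ Ω₁(Z(G))`. Since `V i ≠ 0`, the scalar
`ρᵢ z = χᵢ z` being the identity forces `χᵢ z = 1` for all `i`, hence `φ z = 1` for every character
`φ` of `Ω₁(Z(G))`; but characters of a finite abelian group separate points. -/

open Subgroup

namespace IsPGroup

variable {p : ℕ} [Fact p.Prime] {G : Type*} [Group G] [Finite G]

theorem exists_orderOf_eq_prime [Nontrivial G] (hG : IsPGroup p G) : ∃ g : G, orderOf g = p := by
  obtain ⟨n, hn, hcard⟩ := hG.nontrivial_iff_card.mp inferInstance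
  exact exists_prime_orderOf_dvd_card' p (hcard ▸ dvd_pow_self p hn.ne')

/-- Conjugation by the `p`-group `G` fixes `1 ∈ N`, so it fixes some other element of `N`,
which is then central. -/
theorem nontrivial_inf_center (hG : IsPGroup p G) (N : Subgroup G) [N.Normal] [Nontrivial N] :
    Nontrivial ↥(N ⊓ center G) := by
  obtain ⟨n, hn, hcard⟩ := (hG.to_subgroup N).nontrivial_iff_card.mp inferInstance
  obtain ⟨b, hb, hb1⟩ :=
    (hG.of_equiv ConjAct.toConjAct).exists_fixed_point_of_prime_dvd_card_of_fixed_point N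
      (hcard ▸ dvd_pow_self p hn.ne') (a := 1) (fun g => smul_one g)
  have hbZ : (b : G) ∈ (center G : Set G) := by
    rw [← ConjAct.fixedPoints_eq_center]
    exact fun g => congrArg Subtype.val (hb g)
  exact (nontrivial_iff_exists_ne_one _).mpr ⟨b, ⟨b.2, hbZ⟩, fun h => hb1 (Subtype.ext h.symm)⟩

theorem exists_orderOf_eq_prime_mem_inf_center (hG : IsPGroup p G) {N : Subgroup G} [N.Normal]
    (hN : N ≠ ⊥) : ∃ z ∈ N ⊓ center G, orderOf z = p := by
  have := (nontrivial_iff_ne_bot N).mpr hN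
  have := hG.nontrivial_inf_center N
  obtain ⟨z, hz⟩ := (hG.to_subgroup (N ⊓ center G)).exists_orderOf_eq_prime
  exact ⟨z, z.2, (orderOf_coe z).trans hz⟩

end IsPGroup

theorem Module.End.eq_one_of_smul_one_eq_one {K V : Type*} [Field K] [AddCommGroup V] [Module K V]
    [Nontrivial V] {c : K} (hc : c • (1 : Module.End K V) = 1) : c = 1 := by
  obtain ⟨v, hv⟩ := exists_ne (0 : V)
  exact smul_left_injective K hv (by simpa using LinearMap.congr_fun hc v)

theorem CommGroup.eq_one_of_closure_eq_top {A M : Type*} [CommGroup A] [Finite A] [CommMonoid M]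
    [HasEnoughRootsOfUnity M (Monoid.exponent A)] {S : Set (A →* Mˣ)} (hS : closure S = ⊤) {a : A}
    (ha : ∀ φ ∈ S, φ a = 1) : a = 1 := by
  by_contra h
  obtain ⟨φ, hφ⟩ := CommGroup.exists_apply_ne_one_of_hasEnoughRootsOfUnity A M h
  have hle : closure S ≤ (MonoidHom.eval a).ker := (closure_le _).mpr ha
  exact hφ (hle (hS ▸ mem_top φ))

theorem stmt_13_general (p : ℕ) [Fact p.Prime] (G : Type*) [Group G] [Finite G]
    (hG : IsPGroup p G)
    (k : ℕ) (V : Fin k → Type*)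
    [∀ i, AddCommGroup (V i)] [∀ i, Module ℂ (V i)]
    (ρ : ∀ i, Representation ℂ G (V i))
    (hirr : ∀ i, Nontrivial (V i) ∧
      ∀ W : Submodule ℂ (V i), (∀ g v, v ∈ W → ρ i g v ∈ W) → W = ⊥ ∨ W = ⊤)
    (χ : ∀ _ : Fin k, Subgroup.center G →* ℂˣ)
    (hcentral : ∀ i (g : Subgroup.center G),
      ρ i (g : G) = (χ i g : ℂ) • (LinearMap.id : V i →ₗ[ℂ] V i))
    (hspan : Subgroup.closure
        (Set.range fun i : Fin k =>
          (χ i).comp (Omega1 p (Subgroup.center G)).subtype) = ⊤) :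
    Function.Injective (fun g : G => fun i : Fin k => ρ i g) := by
  change Function.Injective (MonoidHom.pi ρ)
  rw [injective_iff_map_eq_one]
  intro g hg
  by_contra hg1
  obtain ⟨z, ⟨hzN, hzZ⟩, hzp⟩ := hG.exists_orderOf_eq_prime_mem_inf_center
    (N := (MonoidHom.pi ρ).ker) fun hbot => hg1 (mem_bot.mp (hbot ▸ MonoidHom.mem_ker.mpr hg))
  let ω : Omega1 p (center G) := ⟨⟨z, hzZ⟩, Subtype.ext (hzp ▸ pow_orderOf_eq_one z)⟩
  have hχω : ∀ i, χ i ω = 1 := fun i => by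
    have := (hirr i).1
    have h : (χ i ω : ℂ) • (1 : Module.End ℂ (V i)) = 1 := by
      rw [Module.End.one_eq_id, ← hcentral]
      exact congrFun hzN i
    exact Units.val_eq_one.mp (Module.End.eq_one_of_smul_one_eq_one h)
  have : NeZero (Monoid.exponent (Omega1 p (center G))) := ⟨Monoid.exponent_ne_zero_of_finite⟩
  have hω : ω = 1 := CommGroup.eq_one_of_closure_eq_top hspan (by rintro _ ⟨i, rfl⟩; exact hχω i)
  have hz : z = 1 := congrArg (fun x : Omega1 p (center G) => ((x : center G) : G)) hω
  exact (Fact.out : p.Prime).one_lt.ne' (hzp ▸ orderOf_eq_one_iff.mpr hz)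

/-- Let `G` be a finite `p`-group and `ρ₁,…,ρ_k` irreducible complex
representations of `G` with central characters `χ₁,…,χ_k`.  If the restrictions of the
`χᵢ` to `Ω₁(Z(G))` generate (equivalently, span over `𝔽_p`) the character group
`Hom(Ω₁(Z(G)), ℂ*)`, then `ρ₁ ⊕ ⋯ ⊕ ρ_k` is faithful, i.e. the `ρᵢ` jointly separate
elements of `G`. -/
theorem stmt_13 (p : ℕ) [Fact p.Prime] (G : Type*) [Group G] [Finite G]
    (hG : IsPGroup p G)
    (k : ℕ) (V : Fin k → Type*)
    [∀ i, AddCommGroup (V i)] [∀ i, Module ℂ (V i)] [∀ i, FiniteDimensional ℂ (V i)]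
    (ρ : ∀ i, Representation ℂ G (V i))
    (hirr : ∀ i, Nontrivial (V i) ∧
      ∀ W : Submodule ℂ (V i), (∀ g v, v ∈ W → ρ i g v ∈ W) → W = ⊥ ∨ W = ⊤)
    (χ : ∀ _ : Fin k, Subgroup.center G →* ℂˣ)
    (hcentral : ∀ i (g : Subgroup.center G),
      ρ i (g : G) = (χ i g : ℂ) • (LinearMap.id : V i →ₗ[ℂ] V i))
    (hspan : Subgroup.closure
        (Set.range fun i : Fin k =>
          (χ i).comp (Omega1 p (Subgroup.center G)).subtype) = ⊤) :
    Function.Injective (fun g : G => fun i : Fin k => ρ i g) :=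
  stmt_13_general p G hG k V ρ hirr χ hcentral hspan
end
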